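/- Let {h'_n}_{n≥1} and {h''_n}_{n≥1} be non-random sequences with 0 < h'_n ≤ h''_n < 1 such that each of {h'_n} and {h''_n} satisfies (H.1), (H.2), (H.3), and such that the pair satisfies (H.4)(ii). Then, for any fixed λ > 1, with probability one, for all n sufficiently large and for every h ∈ [h'_n, h''_n], V_n(1 − λh) < 1 − h. -/

import Mathlib

open MeasureTheory Filter Set Asymptotics
open scoped Classical

noncomputable section

/-- Empirical distribution function of the first `n` observations. -/
def empDF {Ω : Type*} (X : ℕ → Ω → ℝ) (n : ℕ) (x : ℝ) (ω : Ω) : ℝ :=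
  (((Finset.range n).filter (fun i => X i ω ≤ x)).card : ℝ) / (n : ℝ)

/-- The Strassen set `S₀`: absolutely continuous functions `g` on `[-1,1]` with `g 0 = 0`
and Lebesgue derivative `d` satisfying `∫_{-1}^{1} d(s)² ds ≤ 1`. -/
def StrassenSet : Set (ℝ → ℝ) :=
  {g | g 0 = 0 ∧ ∃ d : ℝ → ℝ,
    IntervalIntegrable d volume (-1) 1 ∧
    IntervalIntegrable (fun u => d u ^ 2) volume (-1) 1 ∧
    (∀ s ∈ Icc (-1 : ℝ) 1, g s = ∫ u in (0 : ℝ)..s, d u) ∧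
    (∫ u in (-1 : ℝ)..(1 : ℝ), d u ^ 2) ≤ 1}

/-- Sup-norm over `[-1,1]`. -/
def supNorm (g : ℝ → ℝ) : ℝ := ⨆ s : Icc (-1 : ℝ) 1, |g s.1|

/-- Sup-norm over `[0,1]`. -/
def supNormP (g : ℝ → ℝ) : ℝ := ⨆ s : Icc (0 : ℝ) 1, |g s.1|

/-- (H.1): `h_n ↓ 0` and `n·h_n ↑ ∞`. -/
def H1 (h : ℕ → ℝ) : Prop :=
  Antitone h ∧ Tendsto h atTop (nhds 0) ∧
    Monotone (fun n : ℕ => (n : ℝ) * h n) ∧ Tendsto (fun n : ℕ => (n : ℝ) * h n) atTop atTop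

/-- (H.2): `log(1/h_n)/log log n → ∞`. -/
def H2 (h : ℕ → ℝ) : Prop :=
  Tendsto (fun n : ℕ => Real.log (1 / h n) / Real.log (Real.log n)) atTop atTop

/-- (H.3): `n·h_n/log n → ∞`. -/
def H3 (h : ℕ → ℝ) : Prop :=
  Tendsto (fun n : ℕ => (n : ℝ) * h n / Real.log n) atTop atTop

/-- (H.4)(i). -/
def H4i (h₁ : ℕ → ℝ) : Prop :=
  Tendsto (fun n : ℕ => Real.sqrt n * h₁ n * Real.log (1 / h₁ n) /
    (Real.log n * Real.sqrt (Real.log (Real.log n)))) atTop atTop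

/-- (H.4)(ii). -/
def H4ii (h₁ h₂ : ℕ → ℝ) : Prop :=
  (fun n : ℕ => Real.sqrt (h₂ n * Real.log (1 / h₂ n)) / (h₁ n * Real.log (1 / h₁ n)))
    =o[atTop] (fun n : ℕ => Real.sqrt n / Real.log n)

/-- (H.4): (i) or (ii). -/
def H4 (h₁ h₂ : ℕ → ℝ) : Prop := H4i h₁ ∨ H4ii h₁ h₂

/-- iid uniform (0,1) random variables. -/
def IsUniformSample {Ω : Type*} [MeasurableSpace Ω] (P : Measure Ω) (U : ℕ → Ω → ℝ) : Prop :=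
  (∀ i, Measurable (U i)) ∧
  ProbabilityTheory.iIndepFun U P ∧
  (∀ i, ∀ t ∈ Icc (0 : ℝ) 1, P {ω | U i ω ≤ t} = ENNReal.ofReal t)

/-- Uniform empirical quantile function `V_n`. -/
def empQV {Ω : Type*} (U : ℕ → Ω → ℝ) (n : ℕ) (t : ℝ) (ω : Ω) : ℝ :=
  sInf {u : ℝ | 0 ≤ u ∧ t ≤ empDF U n u ω}

/-- Uniform empirical process `α_n`. -/
def empProc {Ω : Type*} (U : ℕ → Ω → ℝ) (n : ℕ) (t : ℝ) (ω : Ω) : ℝ :=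
  Real.sqrt n * (empDF U n t ω - t)

/-- Uniform quantile process `β_n`. -/
def quantProc {Ω : Type*} (U : ℕ → Ω → ℝ) (n : ℕ) (t : ℝ) (ω : Ω) : ℝ :=
  Real.sqrt n * (empQV U n t ω - t)

/-- Increments `ξ_n(h,t;s)` of the uniform empirical process. -/
def xiInc {Ω : Type*} (U : ℕ → Ω → ℝ) (n : ℕ) (h t s : ℝ) (ω : Ω) : ℝ :=
  empProc U n (t + h * s) ω - empProc U n t ω

/-- Increments `ζ_n(h,t;s)` of the uniform quantile process. -/
def zetaInc {Ω : Type*} (U : ℕ → Ω → ℝ) (n : ℕ) (h t s : ℝ) (ω : Ω) : ℝ :=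
  quantProc U n (t + h * s) ω - quantProc U n t ω

/-! Let `N_n(s) = #{i < n : U_i > 1 - s}` (`exceedCount`), so that `U_n(1 - s) = 1 - N_n(s)/n`.
Put `c = √λ` and `μ = √c`. If `N_n(c h) ≤ λ n h`, then `U_n(1 - c h) ≥ 1 - λ h`, hence
`V_n(1 - λ h) ≤ 1 - c h < 1 - h`. As `N_n` is monotone, it suffices that `N_n(s) < μ n s` at the
grid points `s = h'_n μ^j`, `j ≤ n`, which cover `[h'_n, c h''_n]` once `h'_n μ^n > c`. A Chernoff
bound for the binomial count `N_n(s)` gives `P(N_n(s) ≥ μ n s) ≤ exp(-(μ log μ - μ + 1) n s)`,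
and by (H.3) the `n + 1` grid probabilities add up to at most `n⁻²`, so Borel–Cantelli applies. -/

open ProbabilityTheory Real Finset

section Chernoff

variable {Ω : Type*} [MeasurableSpace Ω] {P : Measure Ω} [IsProbabilityMeasure P]

theorem mgf_indicator_one {A : Set Ω} (hA : MeasurableSet A) (t : ℝ) :
    mgf (A.indicator 1) P t = 1 + P.real A * (exp t - 1) := by
  have hexp : (fun ω => exp (t * A.indicator 1 ω)) =
      fun ω => A.indicator (fun _ => exp t - 1) ω + 1 := by
    ext ω
    by_cases hω : ω ∈ A <;> simp [hω]
  rw [mgf, hexp, integral_add ((integrable_const _).indicator hA) (integrable_const 1),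
    integral_indicator_const _ hA]
  simp [add_comm]

theorem mgf_indicator_one_le_exp {A : Set Ω} (hA : MeasurableSet A) {p t : ℝ}
    (hp : P.real A ≤ p) (ht : 0 ≤ t) :
    mgf (A.indicator 1) P t ≤ exp (p * (exp t - 1)) := by
  have : 0 ≤ exp t - 1 := by linarith [one_le_exp ht]
  calc mgf (A.indicator 1) P t = 1 + P.real A * (exp t - 1) := mgf_indicator_one hA t
    _ ≤ p * (exp t - 1) + 1 := by nlinarith
    _ ≤ exp (p * (exp t - 1)) := add_one_le_exp _

theorem measureReal_le_card_filter_le_exp {ι β : Type*} [MeasurableSpace β] {X : ι → Ω → β}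
    (hX : ∀ i, Measurable (X i)) (hind : iIndepFun X P) {B : ι → Set β}
    (hB : ∀ i, MeasurableSet (B i)) {p t : ℝ} (hp : ∀ i, P.real (X i ⁻¹' B i) ≤ p) (ht : 0 ≤ t)
    (s : Finset ι) (a : ℝ) :
    P.real {ω | a ≤ #{i ∈ s | X i ω ∈ B i}} ≤ exp (-t * a + #s * p * (exp t - 1)) := by
  set Y : ι → Ω → ℝ := fun i => (X i ⁻¹' B i).indicator 1
  have hYmeas : ∀ i, Measurable (Y i) := fun i => measurable_one.indicator (hX i (hB i))
  have hYind : iIndepFun Y P :=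
    hind.comp (fun i => (B i).indicator (1 : β → ℝ)) fun i => measurable_one.indicator (hB i)
  have hcount : ∀ ω, (#{i ∈ s | X i ω ∈ B i} : ℝ) = (∑ i ∈ s, Y i) ω := by
    intro ω
    simp only [Y, Finset.sum_apply, Set.indicator_apply, natCast_card_filter, Set.mem_preimage,
      Pi.one_apply]
  have hint : Integrable (fun ω => exp (t * (∑ i ∈ s, Y i) ω)) P := by
    refine .of_bound (by fun_prop) (exp (t * #s)) (ae_of_all _ fun ω => ?_)
    rw [norm_of_nonneg (exp_pos _).le, ← hcount]
    exact exp_le_exp.2 (mul_le_mul_of_nonneg_left (mod_cast card_filter_le s _) ht)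
  calc P.real {ω | a ≤ #{i ∈ s | X i ω ∈ B i}}
      = P.real {ω | a ≤ (∑ i ∈ s, Y i) ω} := by simp only [hcount]
    _ ≤ exp (-t * a) * mgf (∑ i ∈ s, Y i) P t := measure_ge_le_exp_mul_mgf a ht hint
    _ ≤ exp (-t * a) * ∏ _i ∈ s, exp (p * (exp t - 1)) := by
      rw [hYind.mgf_sum hYmeas]
      gcongr with i
      · exact fun _ _ => mgf_nonneg
      · exact mgf_indicator_one_le_exp (hX i (hB i)) (hp i) ht
    _ = exp (-t * a + #s * p * (exp t - 1)) := by
      rw [prod_const, ← exp_nat_mul, ← exp_add]; ring_nf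

end Chernoff

theorem ae_eventually_notMem_of_summable {α : Type*} [MeasurableSpace α] {μ : Measure α}
    [IsFiniteMeasure μ] {E : ℕ → Set α} (hE : Summable fun n => μ.real (E n)) :
    ∀ᵐ x ∂μ, ∀ᶠ n in atTop, x ∉ E n := by
  refine ae_eventually_notMem ?_
  convert ENNReal.ofReal_ne_top (r := ∑' n, μ.real (E n)) using 1
  rw [ENNReal.ofReal_tsum_of_nonneg (fun _ => measureReal_nonneg) hE]
  exact tsum_congr fun n => (ofReal_measureReal).symm

theorem mul_log_sub_add_one_pos {x : ℝ} (hx : 1 < x) : 0 < x * log x - x + 1 := by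
  have hx0 : 0 < x := by linarith
  have := add_one_lt_exp (neg_ne_zero.2 (log_pos hx).ne')
  rw [exp_neg, exp_log hx0] at this
  have key := mul_lt_mul_of_pos_left this hx0
  rw [mul_inv_cancel₀ hx0.ne'] at key
  linarith

theorem add_one_mul_exp_neg_le_inv_sq {n : ℕ} (hn : 2 ≤ n) {y : ℝ} (hy : 4 * log n ≤ y) :
    (n + 1) * exp (-y) ≤ ((n : ℝ) ^ 2)⁻¹ := by
  have hn0 : (0 : ℝ) < n := by positivity
  have hexp : exp (-y) ≤ ((n : ℝ) ^ 4)⁻¹ := by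
    rw [← exp_log hn0, ← exp_nat_mul, ← exp_neg]
    exact exp_le_exp.2 (by push_cast; linarith)
  have hn2 : (n : ℝ) + 1 ≤ n ^ 2 := by
    have : (2 : ℝ) ≤ n := by exact_mod_cast hn
    nlinarith
  calc (n + 1) * exp (-y) ≤ n ^ 2 * ((n : ℝ) ^ 4)⁻¹ := by gcongr
    _ = ((n : ℝ) ^ 2)⁻¹ := by field_simp

theorem eventually_mul_lt_pow {μ : ℝ} (hμ : 1 < μ) {c : ℝ} (hc : 0 < c) :
    ∀ᶠ n : ℕ in atTop, c * n < μ ^ n := by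
  filter_upwards [(tendsto_pow_const_div_const_pow_of_one_lt 1 hμ).eventually_lt_const
    (inv_pos.2 hc)] with n hn
  rwa [pow_one, div_lt_iff₀ (by positivity), inv_mul_eq_div, lt_div_iff₀ hc, mul_comm] at hn

theorem Monotone.lt_mul_of_forall_lt_mul_pow {f : ℝ → ℝ} (hf : Monotone f) {a μ κ g : ℝ}
    {J : ℕ} (ha : 0 < a) (hμ : 1 < μ) (hκ : 0 ≤ κ) (hag : a ≤ g) (hgJ : g < a * μ ^ J)
    (hgrid : ∀ j ≤ J, f (a * μ ^ j) < κ * (a * μ ^ j)) : f g < μ * κ * g := by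
  obtain ⟨j, hjg, hgj⟩ := exists_nat_pow_near ((one_le_div ha).2 hag) hμ
  rw [le_div_iff₀ ha, mul_comm] at hjg
  rw [div_lt_iff₀ ha, mul_comm] at hgj
  have hjJ : j + 1 ≤ J :=
    (pow_lt_pow_iff_right₀ hμ).1 (lt_of_mul_lt_mul_left (hjg.trans_lt hgJ) ha.le)
  calc f g ≤ f (a * μ ^ (j + 1)) := hf hgj.le
    _ < κ * (a * μ ^ (j + 1)) := hgrid _ hjJ
    _ = μ * κ * (a * μ ^ j) := by ring
    _ ≤ μ * κ * g := by gcongr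

def exceedCount {Ω : Type*} (U : ℕ → Ω → ℝ) (n : ℕ) (s : ℝ) (ω : Ω) : ℕ :=
  #{i ∈ range n | 1 - s < U i ω}

section Empirical

variable {Ω : Type*} (U : ℕ → Ω → ℝ) (n : ℕ) (ω : Ω)

theorem exceedCount_mono : Monotone fun s => exceedCount U n s ω :=
  fun _ _ hst => card_le_card (monotone_filter_right _ fun _ _ h => by linarith)

theorem empDF_one_sub (hn : 0 < n) (s : ℝ) :
    empDF U n (1 - s) ω = 1 - exceedCount U n s ω / n := by
  have hsplit := card_filter_add_card_filter_not (s := range n) (p := fun i => U i ω ≤ 1 - s)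
  simp only [not_le, card_range] at hsplit
  have hn' : (n : ℝ) ≠ 0 := by positivity
  rw [empDF, exceedCount, eq_sub_iff_add_eq, ← add_div, div_eq_one_iff_eq hn']
  exact_mod_cast hsplit

theorem empQV_le {t u : ℝ} (hu : 0 ≤ u) (htu : t ≤ empDF U n u ω) : empQV U n t ω ≤ u :=
  csInf_le ⟨0, fun _ hx => hx.1⟩ ⟨hu, htu⟩

theorem empQV_one_sub_mul_lt {h c lam : ℝ} (hn : 0 < n) (hh0 : 0 < h) (hh1 : h < 1)
    (hc : 1 < c) (hcl : c ≤ lam) (hcount : (exceedCount U n (c * h) ω : ℝ) ≤ lam * n * h) :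
    empQV U n (1 - lam * h) ω < 1 - h := by
  rcases le_or_gt 1 (lam * h) with hlh | hlh
  · have hdf : 0 ≤ empDF U n 0 ω := div_nonneg (Nat.cast_nonneg _) (Nat.cast_nonneg _)
    have : empQV U n (1 - lam * h) ω ≤ 0 := empQV_le U n ω le_rfl (by linarith)
    linarith
  · have hch : c * h ≤ lam * h := by gcongr
    have hfrac : (exceedCount U n (c * h) ω : ℝ) / n ≤ lam * h := by
      rw [div_le_iff₀ (by positivity)]
      linarith
    have : empQV U n (1 - lam * h) ω ≤ 1 - c * h :=
      empQV_le U n ω (by linarith) (by rw [empDF_one_sub U n ω hn]; linarith)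
    linarith [lt_mul_of_one_lt_left hh0 hc]

end Empirical

theorem H3.eventually_mul_log_le {h : ℕ → ℝ} (hh : H3 h) (K : ℝ) :
    ∀ᶠ n : ℕ in atTop, K * log n ≤ n * h n := by
  filter_upwards [hh.eventually_ge_atTop K,
    (tendsto_log_atTop.comp tendsto_natCast_atTop_atTop).eventually_gt_atTop 0] with n hK hlog
  rw [Function.comp_apply] at hlog
  rwa [le_div_iff₀ hlog] at hK

theorem H3.eventually_lt_mul_pow {h : ℕ → ℝ} (hh : H3 h) (hpos : ∀ n, 0 < h n) {μ : ℝ}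
    (hμ : 1 < μ) {c : ℝ} (hc : 0 < c) : ∀ᶠ n : ℕ in atTop, c < h n * μ ^ n := by
  filter_upwards [hh.eventually_mul_log_le 1, eventually_mul_lt_pow hμ hc,
    (tendsto_log_atTop.comp tendsto_natCast_atTop_atTop).eventually_ge_atTop 1]
    with n hnh hcn hlog
  simp only [Function.comp_apply] at hlog
  nlinarith [hpos n]

def exceedGridEvent {Ω : Type*} (U : ℕ → Ω → ℝ) (n : ℕ) (a μ : ℝ) : Set Ω :=
  ⋃ j ∈ range (n + 1), {ω | μ * n * (a * μ ^ j) ≤ exceedCount U n (a * μ ^ j) ω}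

theorem exceedCount_lt_of_notMem_exceedGridEvent {Ω : Type*} {U : ℕ → Ω → ℝ} {n : ℕ} {ω : Ω}
    {a μ g : ℝ} (hω : ω ∉ exceedGridEvent U n a μ) (ha : 0 < a) (hμ : 1 < μ) (hag : a ≤ g)
    (hgn : g < a * μ ^ n) : (exceedCount U n g ω : ℝ) < μ * μ * n * g := by
  have hgrid : ∀ j ≤ n, (exceedCount U n (a * μ ^ j) ω : ℝ) < μ * n * (a * μ ^ j) :=
    fun j hj => not_le.1 fun hle =>
      hω (mem_iUnion₂.2 ⟨j, mem_range.2 (Nat.lt_succ_of_le hj), hle⟩)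
  have := (Nat.mono_cast.comp (exceedCount_mono U n ω)).lt_mul_of_forall_lt_mul_pow ha hμ
    (by positivity) hag hgn hgrid
  simpa only [Function.comp_apply, mul_assoc] using this

namespace IsUniformSample

variable {Ω : Type*} [MeasurableSpace Ω] {P : Measure Ω} [IsProbabilityMeasure P]
  {U : ℕ → Ω → ℝ}

theorem measureReal_one_sub_lt_le (hU : IsUniformSample P U) (i : ℕ) {s : ℝ} (hs : 0 ≤ s) :
    P.real {ω | 1 - s < U i ω} ≤ s := by
  rcases le_or_gt 1 s with hs1 | hs1
  · exact measureReal_le_one.trans hs1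
  · have hcompl : {ω | 1 - s < U i ω} = {ω | U i ω ≤ 1 - s}ᶜ := by ext; simp
    rw [hcompl, probReal_compl_eq_one_sub (measurableSet_le (hU.1 i) measurable_const),
      measureReal_def, hU.2.2 i _ ⟨by linarith, by linarith⟩, ENNReal.toReal_ofReal (by linarith)]
    linarith

theorem measureReal_exceedCount_ge_le (hU : IsUniformSample P U) (n : ℕ) {s μ : ℝ}
    (hs : 0 ≤ s) (hμ : 1 < μ) :
    P.real {ω | μ * n * s ≤ exceedCount U n s ω} ≤ exp (-(μ * log μ - μ + 1) * (n * s)) := by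
  have := measureReal_le_card_filter_le_exp hU.1 hU.2.1 (B := fun _ => Ioi (1 - s))
    (fun _ => measurableSet_Ioi) (fun i => hU.measureReal_one_sub_lt_le i hs)
    (log_nonneg hμ.le) (range n) (μ * n * s)
  rw [card_range, exp_log (by linarith)] at this
  refine this.trans_eq (congrArg exp ?_)
  ring

theorem measureReal_exceedGridEvent_le (hU : IsUniformSample P U) (n : ℕ) {a μ : ℝ}
    (ha : 0 ≤ a) (hμ : 1 < μ) :
    P.real (exceedGridEvent U n a μ) ≤ (n + 1) * exp (-(μ * log μ - μ + 1) * (n * a)) := by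
  have hδ := mul_log_sub_add_one_pos hμ
  calc P.real (exceedGridEvent U n a μ)
      ≤ ∑ j ∈ range (n + 1), exp (-(μ * log μ - μ + 1) * (n * (a * μ ^ j))) :=
        (measureReal_biUnion_finset_le _ _).trans <| sum_le_sum fun j _ =>
          hU.measureReal_exceedCount_ge_le n (by positivity) hμ
    _ ≤ ∑ _j ∈ range (n + 1), exp (-(μ * log μ - μ + 1) * (n * a)) := by
        refine sum_le_sum fun j _ => exp_le_exp.2 (mul_le_mul_of_nonpos_left ?_ (by linarith))
        gcongr
        exact le_mul_of_one_le_right ha (one_le_pow₀ hμ.le)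
    _ = (n + 1) * exp (-(μ * log μ - μ + 1) * (n * a)) := by simp

theorem summable_measureReal_exceedGridEvent (hU : IsUniformSample P U) {h : ℕ → ℝ}
    (hpos : ∀ n, 0 < h n) (hh : H3 h) {μ : ℝ} (hμ : 1 < μ) :
    Summable fun n => P.real (exceedGridEvent U n (h n) μ) := by
  refine .of_norm_bounded_eventually_nat (summable_nat_pow_inv.2 one_lt_two) ?_
  filter_upwards [hh.eventually_mul_log_le (4 / (μ * log μ - μ + 1)),
    eventually_ge_atTop 2] with n hlog hn
  rw [norm_of_nonneg measureReal_nonneg]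
  refine (hU.measureReal_exceedGridEvent_le n (hpos n).le hμ).trans ?_
  rw [neg_mul]
  refine add_one_mul_exp_neg_le_inv_sq hn ?_
  rwa [div_mul_eq_mul_div, div_le_iff₀' (mul_log_sub_add_one_pos hμ)] at hlog

end IsUniformSample

theorem stmt_12_general
    {Ω : Type*} [MeasurableSpace Ω] (P : Measure Ω) [IsProbabilityMeasure P]
    (U : ℕ → Ω → ℝ) (hU : IsUniformSample P U)
    (h₁ h₂ : ℕ → ℝ) (hpos : ∀ n, 0 < h₁ n) (hlt : ∀ n, h₂ n < 1)
    (hH31 : H3 h₁)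
    (lam : ℝ) (hlam : 1 < lam) :
    ∀ᵐ ω ∂P, ∀ᶠ n in atTop, ∀ h ∈ Icc (h₁ n) (h₂ n),
      empQV U n (1 - lam * h) ω < 1 - h := by
  set c := √lam
  set μ := √c
  have hc : 1 < c := by simpa using sqrt_lt_sqrt zero_le_one hlam
  have hμ : 1 < μ := by simpa using sqrt_lt_sqrt zero_le_one hc
  have hcc : c * c = lam := mul_self_sqrt (by linarith)
  have hμμc : μ * μ * c = lam := by rw [mul_self_sqrt (by linarith), hcc]
  filter_upwards [ae_eventually_notMem_of_summable
    (hU.summable_measureReal_exceedGridEvent hpos hH31 hμ)] with ω hω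
  filter_upwards [hω, hH31.eventually_lt_mul_pow hpos hμ (by linarith : 0 < c),
    eventually_gt_atTop 0] with n hnE hcn hn h ⟨hh₁, hh₂⟩
  have hh0 : 0 < h := (hpos n).trans_le hh₁
  have hh1 : h < 1 := hh₂.trans_lt (hlt n)
  have hcount := exceedCount_lt_of_notMem_exceedGridEvent hnE (hpos n) hμ
    (g := c * h) (by nlinarith) (by nlinarith)
  exact empQV_one_sub_mul_lt U n ω hn hh0 hh1 hc (by nlinarith) (by rw [← hμμc]; linarith)

theorem stmt_12
    {Ω : Type*} [MeasurableSpace Ω] (P : Measure Ω) [IsProbabilityMeasure P]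
    (U : ℕ → Ω → ℝ) (hU : IsUniformSample P U)
    (h₁ h₂ : ℕ → ℝ) (hpos : ∀ n, 0 < h₁ n) (hle : ∀ n, h₁ n ≤ h₂ n) (hlt : ∀ n, h₂ n < 1)
    (hH11 : H1 h₁) (hH12 : H1 h₂) (hH21 : H2 h₁) (hH22 : H2 h₂)
    (hH31 : H3 h₁) (hH32 : H3 h₂) (hH4 : H4ii h₁ h₂)
    (lam : ℝ) (hlam : 1 < lam) :
    ∀ᵐ ω ∂P, ∀ᶠ n in atTop, ∀ h ∈ Icc (h₁ n) (h₂ n),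
      empQV U n (1 - lam * h) ω < 1 - h :=
  stmt_12_general P U hU h₁ h₂ hpos hlt hH31 lam hlam
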